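/- Let f(x,y,u,z,w) = −w³xy − 2u²w²z + w²x²z + w²y²z − wxyz² + u²z³. Let (x,y,u) ∈ ℂ³ with (x,y,u) ≠ (0,0,0) and (z,w) ∈ ℂ² with (z,w) ≠ (0,0). Then f and all five partial derivatives ∂f/∂x, ∂f/∂y, ∂f/∂u, ∂f/∂z, ∂f/∂w vanish simultaneously at (x,y,u,z,w) if and only if there exist nonzero complex numbers λ and μ such that (x,y,u,z,w) equals one of (λ,0,0,μ,0), (0,λ,0,μ,0), (λ,−λ,0,μ,−μ), (λ,λ,0,μ,μ). That is, the projective surface S has exactly the four singular points s₁ = [1,0,0:1,0], s₂ = [0,1,0:1,0], s₃ = [1,−1,0:1,−1], s₄ = [1,1,0:1,1]. -/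
import Mathlib


/-- The bihomogeneous polynomial of bidegree (2,3) cutting out the projective model `S`
of the canonical component of the Whitehead link character variety in ℙ²×ℙ¹. -/
def whiteheadProjF (x y u z w : ℂ) : ℂ :=
  -w^3*x*y - 2*u^2*w^2*z + w^2*x^2*z + w^2*y^2*z - w*x*y*z^2 + u^2*z^3

theorem whitehead_S_singular_points (x y u z w : ℂ)
    (hP2 : (x, y, u) ≠ (0, 0, 0)) (hP1 : (z, w) ≠ (0, 0)) :
    (whiteheadProjF x y u z w = 0 ∧
      -- ∂f/∂x
      -w^3*y + 2*w^2*x*z - w*y*z^2 = 0 ∧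
      -- ∂f/∂y
      -w^3*x + 2*w^2*y*z - w*x*z^2 = 0 ∧
      -- ∂f/∂u
      -4*u*w^2*z + 2*u*z^3 = 0 ∧
      -- ∂f/∂z
      -2*u^2*w^2 + w^2*x^2 + w^2*y^2 - 2*w*x*y*z + 3*u^2*z^2 = 0 ∧
      -- ∂f/∂w
      -3*w^2*x*y - 4*u^2*w*z + 2*w*x^2*z + 2*w*y^2*z - x*y*z^2 = 0)
    ↔ ∃ l μ : ℂ, l ≠ 0 ∧ μ ≠ 0 ∧
        ((x, y, u, z, w) = (l, 0, 0, μ, 0) ∨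
         (x, y, u, z, w) = (0, l, 0, μ, 0) ∨
         (x, y, u, z, w) = (l, -l, 0, μ, -μ) ∨
         (x, y, u, z, w) = (l, l, 0, μ, μ)) := by
  constructor
  · rintro ⟨hf, hx, hy, hu, hz, hw⟩
    by_cases hw0 : w = 0
    · subst hw0
      have hz0 : z ≠ 0 := fun h => hP1 (by simp [h])
      have hz3 : z ^ 3 ≠ 0 := pow_ne_zero _ hz0
      have hz2 : z ^ 2 ≠ 0 := pow_ne_zero _ hz0
      have hu0 : u = 0 := by
        have h : u * z ^ 3 = 0 := by linear_combination hu / 2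
        rcases mul_eq_zero.mp h with h | h
        · exact h
        · exact absurd h hz3
      subst hu0
      have hxy : x * y = 0 := by
        have h : x * y * z ^ 2 = 0 := by linear_combination -hw
        rcases mul_eq_zero.mp h with h | h
        · exact h
        · exact absurd h hz2
      rcases mul_eq_zero.mp hxy with h | h
      · subst h
        have hy0 : y ≠ 0 := fun h => hP2 (by simp [h])
        exact ⟨y, z, hy0, hz0, Or.inr (Or.inl (by simp))⟩
      · subst h
        have hx0 : x ≠ 0 := fun h => hP2 (by simp [h])
        exact ⟨x, z, hx0, hz0, Or.inl (by simp)⟩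
    · by_cases hu0 : u = 0
      · subst hu0
        have A : 2*w*x*z - y*(w^2+z^2) = 0 := by
          have h : w * (2*w*x*z - y*(w^2+z^2)) = 0 := by linear_combination hx
          rcases mul_eq_zero.mp h with h | h
          · exact absurd h hw0
          · exact h
        have B : 2*w*y*z - x*(w^2+z^2) = 0 := by
          have h : w * (2*w*y*z - x*(w^2+z^2)) = 0 := by linear_combination hy
          rcases mul_eq_zero.mp h with h | h
          · exact absurd h hw0
          · exact h
        have C : w*(x^2+y^2) - 2*x*y*z = 0 := by
          have h : w * (w*(x^2+y^2) - 2*x*y*z) = 0 := by linear_combination hz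
          rcases mul_eq_zero.mp h with h | h
          · exact absurd h hw0
          · exact h
        have hx0 : x ≠ 0 := by
          rintro rfl
          have h : w * y ^ 2 = 0 := by linear_combination C
          rcases mul_eq_zero.mp h with h | h
          · exact hw0 h
          · exact hP2 (by simp [pow_eq_zero_iff (two_ne_zero) |>.mp h])
        have hy0 : y ≠ 0 := by
          rintro rfl
          have h : w * x ^ 2 = 0 := by linear_combination C
          rcases mul_eq_zero.mp h with h | h
          · exact hw0 h
          · exact hP2 (by simp [pow_eq_zero_iff (two_ne_zero) |>.mp h])
        have hD : x*y*(z^2-w^2) = 0 := by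
          linear_combination hw/3 - (2*z/3) * C
        have hzw : z^2 - w^2 = 0 := by
          rcases mul_eq_zero.mp hD with h | h
          · rcases mul_eq_zero.mp h with h | h
            · exact absurd h hx0
            · exact absurd h hy0
          · exact h
        have hz0 : z ≠ 0 := by
          rintro rfl
          exact hw0 (by have : w^2 = 0 := by linear_combination -hzw
                        exact pow_eq_zero_iff two_ne_zero |>.mp this)
        have E : w*x - y*z = 0 := by
          have h : (2*z) * (w*x - y*z) = 0 := by linear_combination A - y*hzw
          rcases mul_eq_zero.mp h with h | h
          · exact absurd h (by simpa using hz0)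
          · exact h
        have F : w*y - x*z = 0 := by
          have h : (2*z) * (w*y - x*z) = 0 := by linear_combination B - x*hzw
          rcases mul_eq_zero.mp h with h | h
          · exact absurd h (by simpa using hz0)
          · exact h
        have hG : w * ((x - y) * (x + y)) = 0 := by linear_combination x*E - y*F
        rcases mul_eq_zero.mp hG with h | h
        · exact absurd h hw0
        · rcases mul_eq_zero.mp h with h | h
          · -- x = y
            obtain rfl : x = y := sub_eq_zero.mp h
            have h2 : x * (w - z) = 0 := by linear_combination E
            rcases mul_eq_zero.mp h2 with h2 | h2
            · exact absurd h2 hx0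
            · have hwz : w = z := sub_eq_zero.mp h2
              exact ⟨x, z, hx0, hz0, Or.inr (Or.inr (Or.inr (by simp [hwz])))⟩
          · -- y = -x
            obtain rfl : y = -x := by linear_combination h
            have h2 : x * (w + z) = 0 := by linear_combination E
            rcases mul_eq_zero.mp h2 with h2 | h2
            · exact absurd h2 hx0
            · have h3 : w = -z := by linear_combination h2
              exact ⟨x, z, hx0, hz0, Or.inr (Or.inr (Or.inl (by simp [h3])))⟩
      · -- u ≠ 0, derive contradiction
        exfalso
        have h : u * (z * (z^2 - 2*w^2)) = 0 := by linear_combination hu / 2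
        rcases mul_eq_zero.mp h with h | h
        · exact hu0 h
        rcases mul_eq_zero.mp h with h | hzw
        · subst h
          have hy0 : y = 0 := by
            have h : w^3 * y = 0 := by linear_combination -hx
            rcases mul_eq_zero.mp h with h | h
            · exact absurd (pow_eq_zero_iff three_ne_zero |>.mp h) hw0
            · exact h
          have hx0 : x = 0 := by
            have h : w^3 * x = 0 := by linear_combination -hy
            rcases mul_eq_zero.mp h with h | h
            · exact absurd (pow_eq_zero_iff three_ne_zero |>.mp h) hw0
            · exact h
          have : u^2 * w^2 = 0 := by
            subst hx0; subst hy0; linear_combination -hz/2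
          rcases mul_eq_zero.mp this with h | h
          · exact hu0 (pow_eq_zero_iff two_ne_zero |>.mp h)
          · exact hw0 (pow_eq_zero_iff two_ne_zero |>.mp h)
        · -- z^2 = 2 w^2
          have E1 : 2*x*z - 3*w*y = 0 := by
            have h : w^2 * (2*x*z - 3*w*y) = 0 := by linear_combination hx + w*y*hzw
            rcases mul_eq_zero.mp h with h | h
            · exact absurd (pow_eq_zero_iff two_ne_zero |>.mp h) hw0
            · exact h
          have E2 : 2*y*z - 3*w*x = 0 := by
            have h : w^2 * (2*y*z - 3*w*x) = 0 := by linear_combination hy + w*x*hzw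
            rcases mul_eq_zero.mp h with h | h
            · exact absurd (pow_eq_zero_iff two_ne_zero |>.mp h) hw0
            · exact h
          have hy0 : y = 0 := by
            have h : w^2 * y = 0 := by linear_combination -2*z*E2 - 3*w*E1 + 4*y*hzw
            rcases mul_eq_zero.mp h with h | h
            · exact absurd (pow_eq_zero_iff two_ne_zero |>.mp h) hw0
            · exact h
          have hx0 : x = 0 := by
            have h : w^2 * x = 0 := by linear_combination -2*z*E1 - 3*w*E2 + 4*x*hzw
            rcases mul_eq_zero.mp h with h | h
            · exact absurd (pow_eq_zero_iff two_ne_zero |>.mp h) hw0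
            · exact h
          subst hx0; subst hy0
          have : u^2 * w^2 = 0 := by linear_combination hz/4 - (3*u^2/4)*hzw
          rcases mul_eq_zero.mp this with h | h
          · exact hu0 (pow_eq_zero_iff two_ne_zero |>.mp h)
          · exact hw0 (pow_eq_zero_iff two_ne_zero |>.mp h)
  · rintro ⟨l, μ, hl, hμ, (h | h | h | h)⟩ <;>
      (simp only [Prod.mk.injEq] at h; obtain ⟨rfl, rfl, rfl, rfl, rfl⟩ := h) <;>
      refine ⟨?_, ?_, ?_, ?_, ?_, ?_⟩ <;> simp [whiteheadProjF] <;> ring
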